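/- arXiv:2208.00387 — 2 statements merged into one kernel-verified Lean document; each statement's English description precedes it below -/
import Mathlib

section
/- Every irreducible undirected graph on a finite vertex set V is isomorphic to an induced subgraph of the duality graph of its associated lattice: the map x ↦ cl{x} from V into the lattice of closed sets is injective, and two vertices x, y are adjacent in the graph if and only if cl{x} and cl{y} are adjacent in the duality graph, i.e. cl{x} ⊆ ∇(cl{y}). -/
/-- The dual of a subset `X` of the vertex set: all vertices adjacent to every element of `X`. -/
def dual {V : Type*} (Adj : V → V → Prop) (X : Set V) : Set V := {y | ∀ x ∈ X, Adj x y}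

/-- The closure of a subset: the double dual. -/
def cl {V : Type*} (Adj : V → V → Prop) (X : Set V) : Set V := dual Adj (dual Adj X)

/-- The neighborhood of a vertex. -/
def nbhd {V : Type*} (Adj : V → V → Prop) (x : V) : Set V := {y | Adj x y}

lemma dual_anti {V : Type*} (Adj : V → V → Prop) {X Y : Set V} (h : X ⊆ Y) :
    dual Adj Y ⊆ dual Adj X := fun z hz x hx => hz x (h hx)

lemma subset_cl {V : Type*} {Adj : V → V → Prop} (hs : Symmetric Adj) (X : Set V) :
    X ⊆ cl Adj X := fun x hx z hz => hs (hz x hx)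

lemma dual_cl {V : Type*} {Adj : V → V → Prop} (hs : Symmetric Adj) (X : Set V) :
    dual Adj (cl Adj X) = dual Adj X :=
  le_antisymm (dual_anti Adj (subset_cl hs X)) (subset_cl hs (dual Adj X))

lemma dual_singleton {V : Type*} (Adj : V → V → Prop) (x : V) :
    dual Adj {x} = nbhd Adj x := by
  ext z; simp [dual, nbhd]

theorem stmt_14 {V : Type*} [Fintype V] (Adj : V → V → Prop) (hs : Symmetric Adj)
    (hirr : ∀ x y : V, nbhd Adj x = nbhd Adj y → x = y) :
    Function.Injective (fun x : V => cl Adj {x}) ∧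
    (∀ x y : V, Adj x y ↔ cl Adj {x} ⊆ dual Adj (cl Adj {y})) := by
  constructor
  · intro x y h
    apply hirr
    rw [← dual_singleton, ← dual_singleton, ← dual_cl hs ({x} : Set V),
      ← dual_cl hs ({y} : Set V)]
    simpa using congrArg (dual Adj) h
  · intro x y
    rw [dual_cl hs, dual_singleton]
    constructor
    · intro hxy z hz
      exact hz y (fun w hw => by rw [Set.mem_singleton_iff] at hw; rw [hw]; exact hxy)
    · intro h
      have hx : x ∈ cl Adj {x} := subset_cl hs {x} rfl
      exact hs (h hx)
end

section
/- In an undirected graph on a finite vertex set V, the length of any strictly increasing chain of closed sets ending at a closed set X is at most the number of essential equilocality classes contained in X: if Y₀ ⊊ Y₁ ⊊ ⋯ ⊊ Yₙ = X with all Yᵢ closed, then n is at most the number of equilocality classes consisting of essential vertices that are contained in X. -/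
/-- A subset is closed if it equals its double dual. -/
def Closed {V : Type*} (Adj : V → V → Prop) (X : Set V) : Prop := dual Adj (dual Adj X) = X

/-- A vertex is essential if its neighborhood is a completely meet-irreducible element of
the lattice of closed sets. -/
def Essential {V : Type*} (Adj : V → V → Prop) (x : V) : Prop :=
  ∀ F : Set (Set V), (∀ X ∈ F, Closed Adj X) → ⋂₀ F = nbhd Adj x → nbhd Adj x ∈ F

/-!
An essential vertex `x` lying in a closed set `B` but not in a closed set `A` witnesses, through
its equilocality class, the step from `A` to `B`. Such an `x` exists whenever `B ⊄ A`: dually,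
`∇B ⊉ ∇A`, and a point `z ∈ ∇A \ ∇B` is separated from the closed set `∇B` by some neighborhood
`N(x)`. Among the neighborhoods separating `z` from `∇B` an essential one is found by
induction upwards in the finite lattice of closed sets: if `N(w)` is not meet-irreducible, one of
the closed sets it is the meet of still omits `z` and is strictly larger. Along a chain
`Y₀ ⊊ ⋯ ⊊ Yₙ = X` the witnesses of the `n` steps lie in `X` and have pairwise distinct classes,
since closed sets are unions of equilocality classes.
-/

section

variable {V : Type*} {Adj : V → V → Prop}

def equilocalityClass (Adj : V → V → Prop) (x : V) : Set V := {y | nbhd Adj y = nbhd Adj x}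

lemma mem_equilocalityClass_self (x : V) : x ∈ equilocalityClass Adj x := rfl

lemma dual_subset_dual {A B : Set V} (h : A ⊆ B) : dual Adj B ⊆ dual Adj A :=
  fun _ hy x hx => hy x (h hx)

lemma mem_dual_iff_subset_nbhd (hs : Symmetric Adj) {Z : Set V} {x : V} :
    x ∈ dual Adj Z ↔ Z ⊆ nbhd Adj x :=
  ⟨fun hx _ hz => hs (hx _ hz), fun hx _ hz => hs (hx hz)⟩

lemma subset_dual_dual (hs : Symmetric Adj) (A : Set V) : A ⊆ dual Adj (dual Adj A) :=
  fun _ hx _ hy => hs (hy _ hx)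

lemma closed_dual (hs : Symmetric Adj) (A : Set V) : Closed Adj (dual Adj A) :=
  (dual_subset_dual (subset_dual_dual hs A)).antisymm (subset_dual_dual hs _)

lemma Closed.equilocalityClass_subset (hs : Symmetric Adj) {Z : Set V} (hZ : Closed Adj Z)
    {x : V} (hx : x ∈ Z) : equilocalityClass Adj x ⊆ Z := by
  intro y hy
  rw [← hZ]
  intro w hw
  have hwx : w ∈ nbhd Adj x := hw x hx
  rw [← hy] at hwx
  exact hs hwx

lemma exists_closed_ssuperset_nbhd_of_not_essential {x z : V} (hx : ¬ Essential Adj x)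
    (hz : z ∉ nbhd Adj x) : ∃ W, Closed Adj W ∧ nbhd Adj x ⊂ W ∧ z ∉ W := by
  simp only [Essential, not_forall] at hx
  obtain ⟨F, hFclosed, hFinter, hxF⟩ := hx
  obtain ⟨W, hWF, hzW⟩ : ∃ W ∈ F, z ∉ W := by simpa [← hFinter] using hz
  have hxW : nbhd Adj x ⊆ W := hFinter ▸ Set.sInter_subset_of_mem hWF
  exact ⟨W, hFclosed W hWF, hxW.ssubset_of_ne fun h => hxF (h ▸ hWF), hzW⟩

lemma Closed.exists_essential_separating [Finite V] (hs : Symmetric Adj) {Z : Set V}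
    (hZ : Closed Adj Z) {z : V} (hz : z ∉ Z) :
    ∃ x, Essential Adj x ∧ Z ⊆ nbhd Adj x ∧ z ∉ nbhd Adj x := by
  induction Z using WellFoundedGT.induction with
  | _ Z ih =>
    rw [← hZ] at hz
    simp only [dual, Set.mem_ofPred_eq, not_forall] at hz
    obtain ⟨w, hw, hwz⟩ := hz
    have hZw : Z ⊆ nbhd Adj w := (mem_dual_iff_subset_nbhd hs).1 hw
    by_cases hess : Essential Adj w
    · exact ⟨w, hess, hZw, hwz⟩
    obtain ⟨W, hW, hwW, hzW⟩ := exists_closed_ssuperset_nbhd_of_not_essential hess hwz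
    have hZW : Z ⊂ W := hZw.trans_ssubset hwW
    obtain ⟨x, hx, hWx, hzx⟩ := ih W hZW hW hzW
    exact ⟨x, hx, hZW.subset.trans hWx, hzx⟩

lemma Closed.exists_essential_mem_diff [Finite V] (hs : Symmetric Adj) {A B : Set V}
    (hA : Closed Adj A) (hB : Closed Adj B) (hBA : ¬ B ⊆ A) :
    ∃ x, Essential Adj x ∧ x ∈ B ∧ x ∉ A := by
  obtain ⟨z, hzA, hzB⟩ : ∃ z ∈ dual Adj A, z ∉ dual Adj B := by
    by_contra! h
    exact hBA (hB ▸ hA ▸ dual_subset_dual h)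
  obtain ⟨x, hx, hBx, hzx⟩ := (closed_dual hs B).exists_essential_separating hs hzB
  exact ⟨x, hx, hB ▸ (mem_dual_iff_subset_nbhd hs).2 hBx, fun hxA => hzx (hzA x hxA)⟩

end

theorem stmt_19 {V : Type*} [Fintype V] (Adj : V → V → Prop) (hs : Symmetric Adj)
    (n : ℕ) (Y : Fin (n + 1) → Set V) (hclosed : ∀ i, Closed Adj (Y i))
    (hmono : StrictMono Y) (X : Set V) (hlast : Y (Fin.last n) = X) :
    n ≤ {C : Set V | ∃ x : V, Essential Adj x ∧
          C = {y : V | nbhd Adj y = nbhd Adj x} ∧ C ⊆ X}.ncard := by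
  have step (i : Fin n) : ∃ x, Essential Adj x ∧ x ∈ Y i.succ ∧ x ∉ Y i.castSucc :=
    (hclosed _).exists_essential_mem_diff hs (hclosed _)
      (hmono Fin.castSucc_lt_succ).not_subset
  choose x hess hmem hnot using step
  have hclass (i : Fin n) : equilocalityClass Adj (x i) ⊆ Y i.succ :=
    (hclosed _).equilocalityClass_subset hs (hmem i)
  have hinj : Function.Injective fun i => equilocalityClass Adj (x i) := by
    intro i j (hij : equilocalityClass Adj (x i) = equilocalityClass Adj (x j))
    by_contra hne
    wlog hlt : i < j generalizing i j
    · exact this hij.symm (Ne.symm hne) ((not_lt.1 hlt).lt_of_ne (Ne.symm hne))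
    have hle : i.succ ≤ j.castSucc := Fin.succ_le_castSucc_iff.2 hlt
    have hxj : x j ∈ equilocalityClass Adj (x i) := hij ▸ mem_equilocalityClass_self (x j)
    exact hnot j (hmono.monotone hle (hclass i hxj))
  calc n = (Set.range fun i => equilocalityClass Adj (x i)).ncard := by
        rw [Set.ncard_range_of_injective hinj, Nat.card_eq_fintype_card, Fintype.card_fin]
    _ ≤ _ := Set.ncard_le_ncard ?_ (Set.toFinite _)
  rintro _ ⟨i, rfl⟩
  exact ⟨x i, hess i, rfl, (hclass i).trans (hlast ▸ hmono.monotone (Fin.le_last _))⟩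
end
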